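/- The discriminant of the ℤ-basis (T₁, T₂, T₃, T₅, T₁₁) of W with respect to the trace form of W over ℤ (i.e. Algebra.discr ℤ applied to this basis of the commutative ring W, which is finite free of rank 5 over ℤ) equals 2¹¹ · 3 = 6144. -/

import Mathlib

/-!
Since `2 • R ⊆ W`, multiplication by `2 • x` maps `R = ℤ × ℤ[√2] × ℤ[√3]` into the full-rank
sublattice `W`, and the trace of such an endomorphism does not change when it is restricted to `W`.
Cancelling the factor `2`, the trace form of `W` is the restriction of that of `R`, namely
`Tr (a, b, c) = a + 2 b₁ + 2 c₁`. The trace matrix of `(T₁, T₂, T₃, T₅, T₁₁)` is then an explicit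
integer matrix, whose determinant is `2¹¹ · 3`.
-/

abbrev Rng : Type := ℤ × Zsqrtd 2 × Zsqrtd 3

def Wset : Set Rng :=
  {p | p.1 ≡ p.2.1.re [ZMOD 2] ∧ p.1 ≡ p.2.2.re + p.2.2.im [ZMOD 2] ∧
       p.2.1.im ≡ p.2.2.im [ZMOD 2]}

private lemma modeq_iff (a b : ℤ) : a ≡ b [ZMOD 2] ↔ ((a : ZMod 2) = b) :=
  (ZMod.intCast_eq_intCast_iff a b 2).symm

def W : Subring Rng where
  carrier := Wset
  zero_mem' := by refine ⟨?_, ?_, ?_⟩ <;> decide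
  one_mem' := by refine ⟨?_, ?_, ?_⟩ <;> decide
  add_mem' := by
    rintro a b ⟨h1, h2, h3⟩ ⟨g1, g2, g3⟩
    refine ⟨h1.add g1, ?_, h3.add g3⟩
    simpa [add_add_add_comm] using h2.add g2
  neg_mem' := by
    rintro a ⟨h1, h2, h3⟩
    refine ⟨h1.neg, ?_, h3.neg⟩
    have := h2.neg
    simp only [Wset, Set.mem_setOf_eq, Prod.fst_neg, Prod.snd_neg, Zsqrtd.re_neg,
      Zsqrtd.im_neg, Int.modEq_iff_dvd] at this ⊢
    omega
  mul_mem' := by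
    rintro a b ⟨h1, h2, h3⟩ ⟨g1, g2, g3⟩
    simp only [Wset, Set.mem_setOf_eq, Prod.fst_mul, Prod.snd_mul, Zsqrtd.re_mul,
      Zsqrtd.im_mul, modeq_iff] at h1 h2 h3 g1 g2 g3 ⊢
    push_cast at h1 h2 h3 g1 g2 g3 ⊢
    have h0 : (2 : ZMod 2) = 0 := rfl
    refine ⟨?_, ?_, ?_⟩
    · rw [← h1, ← g1, h0]; ring
    · linear_combination (b.1 : ZMod 2) * h2 + ((a.2.2.re : ZMod 2) + a.2.2.im) * g2 -
        ((a.2.2.im : ZMod 2) * b.2.2.im) * h0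
    · linear_combination (b.2.1.im : ZMod 2) * h2 - (b.2.1.im : ZMod 2) * h1
        + (b.2.1.re : ZMod 2) * h3 + ((a.2.2.re : ZMod 2) + a.2.2.im) * g3
        + (a.2.2.im : ZMod 2) * g2 - (a.2.2.im : ZMod 2) * g1
        + ((a.2.2.im : ZMod 2) * b.2.2.im) * h0

lemma mem_W_iff (x : Rng) : x ∈ W ↔ x ∈ Wset := Iff.rfl

/-- The basis `T₁ = (1,1,1)`, `T₂ = (−1, −1+√2, √3)`, `T₃ = (−2, √2, 1−√3)`,
`T₅ = (−1, 1, −1)`, `T₁₁ = (2, 2−√2, −3+√3)` of `W`. -/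
def Tb : Fin 5 → W :=
  ![⟨((1 : ℤ), (⟨1, 0⟩ : Zsqrtd 2), (⟨1, 0⟩ : Zsqrtd 3)), by
      rw [mem_W_iff]; refine ⟨?_, ?_, ?_⟩ <;> decide⟩,
    ⟨((-1 : ℤ), (⟨-1, 1⟩ : Zsqrtd 2), (⟨0, 1⟩ : Zsqrtd 3)), by
      rw [mem_W_iff]; refine ⟨?_, ?_, ?_⟩ <;> decide⟩,
    ⟨((-2 : ℤ), (⟨0, 1⟩ : Zsqrtd 2), (⟨1, -1⟩ : Zsqrtd 3)), by
      rw [mem_W_iff]; refine ⟨?_, ?_, ?_⟩ <;> decide⟩,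
    ⟨((-1 : ℤ), (⟨1, 0⟩ : Zsqrtd 2), (⟨-1, 0⟩ : Zsqrtd 3)), by
      rw [mem_W_iff]; refine ⟨?_, ?_, ?_⟩ <;> decide⟩,
    ⟨((2 : ℤ), (⟨2, -1⟩ : Zsqrtd 2), (⟨-3, 1⟩ : Zsqrtd 3)), by
      rw [mem_W_iff]; refine ⟨?_, ?_, ?_⟩ <;> decide⟩]

namespace Zsqrtd

variable (d : ℤ)

noncomputable def basis : Module.Basis (Fin 2) ℤ (ℤ√d) :=
  .ofEquivFun
    { toFun := fun z => ![z.re, z.im]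
      invFun := fun v => ⟨v 0, v 1⟩
      map_add' := fun z w => by ext i; fin_cases i <;> rfl
      map_smul' := fun n z => by ext i; fin_cases i <;> simp
      left_inv := fun z => rfl
      right_inv := fun v => by ext i; fin_cases i <;> rfl }

instance : Module.Free ℤ (ℤ√d) := .of_basis (basis d)

instance : Module.Finite ℤ (ℤ√d) := .of_basis (basis d)

variable {d}

@[simp]
theorem basis_repr (z : ℤ√d) : (basis d).repr z = ![z.re, z.im] := rfl

@[simp]
theorem basis_zero : basis d 0 = 1 := by
  rw [basis, Module.Basis.coe_ofEquivFun]
  rfl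

@[simp]
theorem basis_one : basis d 1 = sqrtd := by
  rw [basis, Module.Basis.coe_ofEquivFun]
  rfl

theorem trace_eq_two_mul_re (z : ℤ√d) : Algebra.trace ℤ (ℤ√d) z = 2 * z.re := by
  rw [Algebra.trace_eq_matrix_trace (basis d), Matrix.trace, Fin.sum_univ_two, two_mul]
  simp [Algebra.leftMulMatrix_eq_repr_mul]

end Zsqrtd

theorem Subring.trace_eq_of_smul_mem {S : Type*} [CommRing S] [Module.Free ℤ S]
    [Module.Finite ℤ S] (A : Subring S) {n : ℤ} (hn : n ≠ 0) (hA : ∀ s : S, n • s ∈ A)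
    (x : A) : Algebra.trace ℤ A x = Algebra.trace ℤ S x := by
  have hmem : ∀ s, Algebra.lmul ℤ S (n • (x : S)) s ∈ A.toAddSubgroup.toIntSubmodule := fun s => by
    rw [Algebra.coe_lmul_eq_mul, LinearMap.mul_apply', smul_mul_assoc, ← mul_smul_comm]
    exact A.mul_mem x.2 (hA s)
  apply mul_left_cancel₀ hn
  rw [← smul_eq_mul, ← smul_eq_mul, ← map_smul, ← map_smul, Algebra.trace_apply,
    Algebra.trace_apply, ← LinearMap.trace_restrict_eq_of_forall_mem _ _ hmem]
  rfl

theorem trace_rng (x : Rng) : Algebra.trace ℤ Rng x = x.1 + 2 * x.2.1.re + 2 * x.2.2.re := by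
  simp [Algebra.trace_prod_apply, Zsqrtd.trace_eq_two_mul_re, add_assoc]

theorem two_smul_mem_W (x : Rng) : (2 : ℤ) • x ∈ W := by
  refine ⟨?_, ?_, ?_⟩ <;> simp [Int.ModEq]

theorem trace_W (x : W) :
    Algebra.trace ℤ W x = (x : Rng).1 + 2 * (x : Rng).2.1.re + 2 * (x : Rng).2.2.re :=
  (W.trace_eq_of_smul_mem two_ne_zero two_smul_mem_W x).trans (trace_rng x)

theorem traceMatrix_Tb : Algebra.traceMatrix ℤ Tb =
    !![5, -3, 0, -1, 0;
      -3, 13, 0, -1, -4;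
      0, 0, 16, 0, -20;
      -1, -1, 0, 5, 8;
      0, -4, -20, 8, 40] := by
  ext i j
  rw [Algebra.traceMatrix_apply, Algebra.traceForm_apply, trace_W]
  fin_cases i <;> fin_cases j <;> rfl

theorem det_traceMatrix_Tb : (Algebra.traceMatrix ℤ Tb).det = 2 ^ 11 * 3 := by
  rw [traceMatrix_Tb]
  simp [Matrix.det_succ_row_zero, Fin.sum_univ_succ, Fin.succAbove]

/-- The discriminant of the `ℤ`-basis `(T₁, T₂, T₃, T₅, T₁₁)` of `W` with respect to the
trace form of `W` over `ℤ` equals `2¹¹ · 3 = 6144`. -/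
theorem stmt3 : Algebra.discr ℤ Tb = 2 ^ 11 * 3 ∧ ((2 : ℤ) ^ 11 * 3 = 6144) :=
  ⟨by rw [Algebra.discr_def, det_traceMatrix_Tb], by norm_num⟩
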